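/- Suppose a function S: [0,∞)² → (0,1] is continuous, satisfies S(0,0)=1, and satisfies the bivariate lack-of-memory property S(t+s₁, t+s₂) = S(t,t)·S(s₁,s₂) for all t, s₁, s₂ ≥ 0, and additionally s ↦ S(s,0) and s ↦ S(0,s) are exponential survival functions. Then there exist λ₁, λ₂, λ₁₂ ≥ 0 such that S(t₁,t₂) = exp(−λ₁t₁ − λ₂t₂ − λ₁₂ max{t₁,t₂}) for all t₁, t₂ ≥ 0, provided S is a valid bivariate survival function (i.e., 2-increasing in the survival sense). -/

import Mathlib

/-!
On the diagonal, lack of memory makes `t ↦ S t t` a continuous positive solution of Cauchy's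
multiplicative equation, so `S t t = exp (-μ t)`; off the diagonal it gives
`S t₁ t₂ = S t₂ t₂ · S (t₁ - t₂) 0` for `t₂ ≤ t₁`. Hence `S` has the Marshall–Olkin form with
`λ₁ = μ - m₂`, `λ₂ = μ - m₁`, `λ₁₂ = m₁ + m₂ - μ`, where `m₁, m₂` are the marginal rates.
These are nonnegative by 2-increasingness: on `[1,2] × [0,1]` it reads
`(e^{-m₁} - e^{-μ}) (1 - e^{-m₁}) ≥ 0`, and on `[0,t]²` it says that
`e^{-m₁ t} + e^{-m₂ t} - e^{-μ t}` is maximal at `t = 0`, where its derivative is `μ - m₁ - m₂`.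
-/

open Real Set

theorem eq_mul_of_continuousOn_Ici_of_map_add {h : ℝ → ℝ} (hc : ContinuousOn h (Ici 0))
    (hadd : ∀ a b, 0 ≤ a → 0 ≤ b → h (a + b) = h a + h b) {t : ℝ} (ht : 0 ≤ t) :
    h t = t * h 1 := by
  have h0 : h 0 = 0 := by simpa using hadd 0 0 le_rfl le_rfl
  -- `x ↦ h x⁺ - h x⁻` extends `h` to an additive map on `ℝ`
  have hF_add : ∀ x y : ℝ, h (x + y)⁺ - h (x + y)⁻ = (h x⁺ - h x⁻) + (h y⁺ - h y⁻) := by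
    intro x y
    have key : (x + y)⁺ + (x⁻ + y⁻) = (x + y)⁻ + (x⁺ + y⁺) := by
      linarith [posPart_sub_negPart (x + y), posPart_sub_negPart x, posPart_sub_negPart y]
    have := congrArg h key
    simp only [hadd _ _ (posPart_nonneg _) (add_nonneg (negPart_nonneg _) (negPart_nonneg _)),
      hadd _ _ (negPart_nonneg _) (add_nonneg (posPart_nonneg _) (posPart_nonneg _)),
      hadd _ _ (negPart_nonneg _) (negPart_nonneg _),
      hadd _ _ (posPart_nonneg _) (posPart_nonneg _)] at this
    linarith
  let F : ℝ →+ ℝ := AddMonoidHom.mk' (fun x => h x⁺ - h x⁻) hF_add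
  have hF_cont : Continuous F :=
    (hc.comp_continuous continuous_posPart fun x => posPart_nonneg x).sub
      (hc.comp_continuous continuous_negPart fun x => negPart_nonneg x)
  have hF_eq : ∀ x, 0 ≤ x → F x = h x := fun x hx => by
    simp [F, posPart_eq_self.2 hx, negPart_eq_zero.2 hx, h0]
  rw [← hF_eq t ht, ← hF_eq 1 zero_le_one]
  simpa using map_real_smul F hF_cont t 1

theorem exists_eq_exp_of_continuousOn_Ici_of_map_add_eq_mul {f : ℝ → ℝ}
    (hc : ContinuousOn f (Ici 0)) (hpos : ∀ t, 0 ≤ t → 0 < f t)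
    (hmul : ∀ a b, 0 ≤ a → 0 ≤ b → f (a + b) = f a * f b) :
    ∃ μ : ℝ, ∀ t, 0 ≤ t → f t = exp (-μ * t) := by
  refine ⟨-log (f 1), fun t ht => ?_⟩
  have hlog := eq_mul_of_continuousOn_Ici_of_map_add (hc.log fun t ht => (hpos t ht).ne')
    (fun a b ha hb => by rw [hmul a b ha hb, log_mul (hpos a ha).ne' (hpos b hb).ne']) ht
  rw [← exp_log (hpos t ht), hlog, neg_neg, mul_comm]

theorem nonpos_of_hasDerivWithinAt_Ici_of_isMaxOn {g : ℝ → ℝ} {g' a : ℝ}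
    (hg : HasDerivWithinAt g g' (Ici a) a) (hmax : IsMaxOn g (Ici a) a) : g' ≤ 0 := by
  have hcone : (a + 1) - a ∈ posTangentConeAt (Ici a) a :=
    sub_mem_posTangentConeAt_of_segment_subset <| by
      rw [segment_eq_Icc (by linarith)]; exact Icc_subset_Ici_self
  simpa using hmax.localize.hasFDerivWithinAt_nonpos hg hcone

def HasBivariateLackOfMemory (S : ℝ → ℝ → ℝ) : Prop :=
  ∀ t s1 s2 : ℝ, 0 ≤ t → 0 ≤ s1 → 0 ≤ s2 → S (t + s1) (t + s2) = S t t * S s1 s2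

def IsTwoIncreasing (S : ℝ → ℝ → ℝ) : Prop :=
  ∀ a1 b1 a2 b2 : ℝ, 0 ≤ a1 → a1 ≤ b1 → 0 ≤ a2 → a2 ≤ b2 →
    0 ≤ S a1 a2 - S a1 b2 - S b1 a2 + S b1 b2

theorem IsTwoIncreasing.swap {S : ℝ → ℝ → ℝ} (hS : IsTwoIncreasing S) :
    IsTwoIncreasing (Function.swap S) := fun a1 b1 a2 b2 ha1 hab1 ha2 hab2 => by
  simpa only [Function.swap, sub_add_eq_add_sub, sub_right_comm] using
    hS a2 b2 a1 b1 ha2 hab2 ha1 hab1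

theorem IsTwoIncreasing.diag_rate_le_add {S : ℝ → ℝ → ℝ} (h2 : IsTwoIncreasing S) {m1 m2 μ : ℝ}
    (hmarg1 : ∀ s, 0 ≤ s → S s 0 = exp (-m1 * s)) (hmarg2 : ∀ s, 0 ≤ s → S 0 s = exp (-m2 * s))
    (hdiag : ∀ t, 0 ≤ t → S t t = exp (-μ * t)) : μ ≤ m1 + m2 := by
  let g : ℝ → ℝ := fun t => exp (-m1 * t) + exp (-m2 * t) - exp (-μ * t)
  have hmax : IsMaxOn g (Ici 0) 0 := fun t (ht : 0 ≤ t) => by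
    have hsq := h2 0 t 0 t le_rfl ht le_rfl ht
    rw [hmarg1 0 le_rfl, hmarg2 t ht, hmarg1 t ht, hdiag t ht, mul_zero, exp_zero] at hsq
    show g t ≤ g 0
    simp only [g, mul_zero, exp_zero]
    linarith
  have hexp (c : ℝ) : HasDerivAt (fun t => exp (c * t)) c 0 := by
    simpa using ((hasDerivAt_id (0 : ℝ)).const_mul c).exp
  have hg : HasDerivAt g (-m1 + -m2 - -μ) 0 := ((hexp _).add (hexp _)).sub (hexp _)
  linarith [nonpos_of_hasDerivWithinAt_Ici_of_isMaxOn hg.hasDerivWithinAt hmax]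

namespace HasBivariateLackOfMemory

variable {S : ℝ → ℝ → ℝ}

theorem swap (hS : HasBivariateLackOfMemory S) : HasBivariateLackOfMemory (Function.swap S) :=
  fun t s1 s2 ht hs1 hs2 => hS t s2 s1 ht hs2 hs1

theorem apply_of_le (hS : HasBivariateLackOfMemory S) {t1 t2 : ℝ} (ht2 : 0 ≤ t2) (h : t2 ≤ t1) :
    S t1 t2 = S t2 t2 * S (t1 - t2) 0 := by
  simpa using hS t2 (t1 - t2) 0 ht2 (sub_nonneg.2 h) le_rfl

theorem exists_diag_eq_exp (hS : HasBivariateLackOfMemory S) (hpos : ∀ t, 0 ≤ t → 0 < S t t)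
    (hcont : ContinuousOn (fun p : ℝ × ℝ => S p.1 p.2) (Ici 0 ×ˢ Ici 0)) :
    ∃ μ : ℝ, ∀ t, 0 ≤ t → S t t = exp (-μ * t) :=
  exists_eq_exp_of_continuousOn_Ici_of_map_add_eq_mul
    (hcont.comp (continuous_id.prodMk continuous_id).continuousOn fun _ ht => ⟨ht, ht⟩) hpos
    fun a b ha hb => hS a b b ha hb hb

theorem eq_exp_of_le (hS : HasBivariateLackOfMemory S) {m1 μ : ℝ}
    (hmarg1 : ∀ s, 0 ≤ s → S s 0 = exp (-m1 * s)) (hdiag : ∀ t, 0 ≤ t → S t t = exp (-μ * t))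
    {t1 t2 : ℝ} (ht2 : 0 ≤ t2) (h : t2 ≤ t1) :
    S t1 t2 = exp (-m1 * t1 - (μ - m1) * t2) := by
  rw [hS.apply_of_le ht2 h, hdiag t2 ht2, hmarg1 _ (sub_nonneg.2 h), ← exp_add]
  ring_nf

theorem eq_marshallOlkin (hS : HasBivariateLackOfMemory S) {m1 m2 μ : ℝ}
    (hmarg1 : ∀ s, 0 ≤ s → S s 0 = exp (-m1 * s)) (hmarg2 : ∀ s, 0 ≤ s → S 0 s = exp (-m2 * s))
    (hdiag : ∀ t, 0 ≤ t → S t t = exp (-μ * t)) {t1 t2 : ℝ} (ht1 : 0 ≤ t1) (ht2 : 0 ≤ t2) :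
    S t1 t2 = exp (-(μ - m2) * t1 - (μ - m1) * t2 - (m1 + m2 - μ) * max t1 t2) := by
  rcases le_total t2 t1 with h | h
  · rw [hS.eq_exp_of_le hmarg1 hdiag ht2 h, max_eq_left h]
    ring_nf
  · calc S t1 t2 = Function.swap S t2 t1 := rfl
      _ = exp (-m2 * t2 - (μ - m2) * t1) := hS.swap.eq_exp_of_le hmarg2 hdiag ht1 h
      _ = _ := by rw [max_eq_right h]; ring_nf

theorem marginal_rate_le_diag_rate (hS : HasBivariateLackOfMemory S) (h2 : IsTwoIncreasing S)
    {m μ : ℝ} (hm : 0 < m) (hmarg : ∀ s, 0 ≤ s → S s 0 = exp (-m * s))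
    (hdiag : ∀ t, 0 ≤ t → S t t = exp (-μ * t)) : m ≤ μ := by
  have hrect := h2 1 2 0 1 zero_le_one one_le_two le_rfl zero_le_one
  have h21 : S 2 1 = S 1 1 * S 1 0 := by
    simpa [one_add_one_eq_two] using hS 1 1 0 zero_le_one zero_le_one le_rfl
  have h20 : exp (-m * 2) = exp (-m * 1) ^ 2 := by rw [← exp_nat_mul]; ring_nf
  rw [h21, hmarg 1 zero_le_one, hmarg 2 zero_le_two, hdiag 1 zero_le_one, h20] at hrect
  have hm1 : exp (-m * 1) < 1 := exp_lt_one_iff.2 (by linarith)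
  have : exp (-μ * 1) ≤ exp (-m * 1) := by nlinarith
  simpa using this

end HasBivariateLackOfMemory

theorem bivariate_LOM_characterizes_MO_general (S : ℝ → ℝ → ℝ)
    (hrange : ∀ t1 t2 : ℝ, 0 ≤ t1 → 0 ≤ t2 → S t1 t2 ∈ Set.Ioc (0:ℝ) 1)
    (hcont : ContinuousOn (fun p : ℝ × ℝ => S p.1 p.2) (Set.Ici 0 ×ˢ Set.Ici 0))
    (hLOM : ∀ t s1 s2 : ℝ, 0 ≤ t → 0 ≤ s1 → 0 ≤ s2 →
      S (t + s1) (t + s2) = S t t * S s1 s2)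
    (hmarg1 : ∃ m1 : ℝ, 0 < m1 ∧ ∀ s : ℝ, 0 ≤ s → S s 0 = Real.exp (-m1 * s))
    (hmarg2 : ∃ m2 : ℝ, 0 < m2 ∧ ∀ s : ℝ, 0 ≤ s → S 0 s = Real.exp (-m2 * s))
    (h2incr : ∀ a1 b1 a2 b2 : ℝ, 0 ≤ a1 → a1 ≤ b1 → 0 ≤ a2 → a2 ≤ b2 →
      0 ≤ S a1 a2 - S a1 b2 - S b1 a2 + S b1 b2) :
    ∃ l1 l2 l12 : ℝ, 0 ≤ l1 ∧ 0 ≤ l2 ∧ 0 ≤ l12 ∧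
      ∀ t1 t2 : ℝ, 0 ≤ t1 → 0 ≤ t2 →
        S t1 t2 = Real.exp (-l1 * t1 - l2 * t2 - l12 * max t1 t2) := by
  obtain ⟨m1, hm1, hS1⟩ := hmarg1
  obtain ⟨m2, hm2, hS2⟩ := hmarg2
  have hS : HasBivariateLackOfMemory S := hLOM
  have h2 : IsTwoIncreasing S := h2incr
  obtain ⟨μ, hdiag⟩ := hS.exists_diag_eq_exp (fun t ht => (hrange t t ht ht).1) hcont
  refine ⟨μ - m2, μ - m1, m1 + m2 - μ, ?_, ?_, ?_,
    fun t1 t2 ht1 ht2 => hS.eq_marshallOlkin hS1 hS2 hdiag ht1 ht2⟩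
  · exact sub_nonneg.2 (hS.swap.marginal_rate_le_diag_rate h2.swap hm2 hS2 hdiag)
  · exact sub_nonneg.2 (hS.marginal_rate_le_diag_rate h2 hm1 hS1 hdiag)
  · exact sub_nonneg.2 (h2.diag_rate_le_add hS1 hS2 hdiag)

/-- Marshall–Olkin characterization of the bivariate lack-of-memory property. -/
theorem bivariate_LOM_characterizes_MO (S : ℝ → ℝ → ℝ)
    (hrange : ∀ t1 t2 : ℝ, 0 ≤ t1 → 0 ≤ t2 → S t1 t2 ∈ Set.Ioc (0:ℝ) 1)
    (hcont : ContinuousOn (fun p : ℝ × ℝ => S p.1 p.2) (Set.Ici 0 ×ˢ Set.Ici 0))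
    (h00 : S 0 0 = 1)
    (hLOM : ∀ t s1 s2 : ℝ, 0 ≤ t → 0 ≤ s1 → 0 ≤ s2 →
      S (t + s1) (t + s2) = S t t * S s1 s2)
    (hmarg1 : ∃ m1 : ℝ, 0 < m1 ∧ ∀ s : ℝ, 0 ≤ s → S s 0 = Real.exp (-m1 * s))
    (hmarg2 : ∃ m2 : ℝ, 0 < m2 ∧ ∀ s : ℝ, 0 ≤ s → S 0 s = Real.exp (-m2 * s))
    (h2incr : ∀ a1 b1 a2 b2 : ℝ, 0 ≤ a1 → a1 ≤ b1 → 0 ≤ a2 → a2 ≤ b2 →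
      0 ≤ S a1 a2 - S a1 b2 - S b1 a2 + S b1 b2) :
    ∃ l1 l2 l12 : ℝ, 0 ≤ l1 ∧ 0 ≤ l2 ∧ 0 ≤ l12 ∧
      ∀ t1 t2 : ℝ, 0 ≤ t1 → 0 ≤ t2 →
        S t1 t2 = Real.exp (-l1 * t1 - l2 * t2 - l12 * max t1 t2) :=
  bivariate_LOM_characterizes_MO_general S hrange hcont hLOM hmarg1 hmarg2 h2incr
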